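/- Let ξ_k, k ≥ 1, be independent real-valued random variables such that E[ξ_k] = 0 and E[ξ_k²] > 0 for every k, suppose there exist a real number c > 0 and a real number α ≥ −1 such that lim_{k→∞} k^{−α} E[ξ_k²] = c, and suppose in addition there is a constant c₁ > 0, independent of k, such that E[ξ_k⁴] ≤ c₁ (E[ξ_k²])² for all k ≥ 1. Then, with probability one, lim_{N→∞} (Σ_{k=1}^N ξ_k²) / (Σ_{k=1}^N E[ξ_k²]) = 1. -/

import Mathlib

/-!
Write `v k = E[ξ_k²]` and `B N = v 1 + ⋯ + v N`. The bounds `a k^α ≤ v k ≤ R k^α`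
(with `α ≥ -1`) make `B` diverge and give `max_{k ≤ N} v k ≤ C (B N)^γ` for some `γ < 1`.
Since the `ξ_k²` are independent with `Var(ξ_k²) ≤ c₁ v_k²`, the variance of
`S N = ξ_1² + ⋯ + ξ_N²` is at most `c₁ ∑ v_k² ≤ c₁ C (B N)^(1+γ)`. Along the indices `n j`
where `B` first exceeds a suitable power of `j`, Chebyshev's inequality and Borel–Cantelli give
`S (n j) / B (n j) → 1` almost surely; as `B (n (j+1)) / B (n j) → 1` and `S`, `B` are
monotone, this extends to the whole sequence.
-/

open MeasureTheory ProbabilityTheory Filter Finset Topology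

lemma tendsto_sum_range_add_one_rpow_atTop {α : ℝ} (hα : -1 ≤ α) :
    Tendsto (fun N : ℕ => ∑ k ∈ range N, ((k : ℝ) + 1) ^ α) atTop atTop := by
  refine (not_summable_iff_tendsto_nat_atTop_of_nonneg fun k => by positivity).1 fun h => ?_
  have : Summable fun n : ℕ => (n : ℝ) ^ α :=
    (summable_nat_add_iff 1).1 (by simpa only [Nat.cast_add_one] using h)
  exact (Real.summable_nat_rpow.1 this).not_ge hα

lemma rpow_add_one_div_le_sum_range_add_one_rpow {α : ℝ} (hα : 0 ≤ α) (N : ℕ) :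
    (N : ℝ) ^ (α + 1) / (α + 1) ≤ ∑ k ∈ range N, ((k : ℝ) + 1) ^ α := by
  have hmono : MonotoneOn (fun x : ℝ => x ^ α) (Set.Icc 0 (0 + N)) :=
    fun x hx _ _ hxy => Real.rpow_le_rpow hx.1 hxy hα
  have h := hmono.integral_le_sum
  rw [zero_add, integral_rpow (Or.inl (by linarith)), Real.zero_rpow (by linarith), sub_zero] at h
  simpa only [zero_add, Nat.cast_add_one] using h

lemma exists_rpow_mul_le_and_le_rpow_mul {v : ℕ → ℝ} {α c : ℝ} (hv : ∀ k, 0 < v k)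
    (hc : 0 < c) (hlim : Tendsto (fun k : ℕ => ((k : ℝ) + 1) ^ (-α) * v k) atTop (𝓝 c)) :
    ∃ a R : ℝ, 0 < a ∧
      ∀ k : ℕ, a * ((k : ℝ) + 1) ^ α ≤ v k ∧ v k ≤ R * ((k : ℝ) + 1) ^ α := by
  set u := fun k : ℕ => ((k : ℝ) + 1) ^ (-α) * v k
  have hu : ∀ k, 0 < u k := fun k => mul_pos (by positivity) (hv k)
  have hvu : ∀ k, v k = u k * ((k : ℝ) + 1) ^ α := fun k => by
    have : 0 < ((k : ℝ) + 1) ^ α := by positivity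
    simp only [u, Real.rpow_neg (by positivity : (0 : ℝ) ≤ k + 1)]
    field_simp
  obtain ⟨R, hR⟩ := hlim.bddAbove_range
  obtain ⟨R', hR'⟩ := (hlim.inv₀ hc.ne').bddAbove_range
  have hR'pos : 0 < R' := (inv_pos.2 (hu 0)).trans_le (hR' ⟨0, rfl⟩)
  refine ⟨R'⁻¹, R, inv_pos.2 hR'pos, fun k => ⟨?_, ?_⟩⟩
  · rw [hvu k]
    gcongr
    exact inv_le_of_inv_le₀ (hu k) (hR' ⟨k, rfl⟩)
  · rw [hvu k]
    gcongr
    exact hR ⟨k, rfl⟩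

lemma tendsto_sum_range_atTop_of_rpow_mul_le {v : ℕ → ℝ} {α a : ℝ} (hα : -1 ≤ α)
    (ha : 0 < a) (hv : ∀ k : ℕ, a * ((k : ℝ) + 1) ^ α ≤ v k) :
    Tendsto (fun N => ∑ k ∈ range N, v k) atTop atTop :=
  tendsto_atTop_mono (fun N => by rw [mul_sum]; exact sum_le_sum fun k _ => hv k)
    ((tendsto_sum_range_add_one_rpow_atTop hα).const_mul_atTop ha)

lemma exists_le_mul_sum_range_rpow {v : ℕ → ℝ} {α a R : ℝ} (ha : 0 < a)
    (hv : ∀ k : ℕ, a * ((k : ℝ) + 1) ^ α ≤ v k ∧ v k ≤ R * ((k : ℝ) + 1) ^ α) :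
    ∃ γ C : ℝ, γ < 1 ∧ ∀ N, ∀ k < N, v k ≤ C * (∑ i ∈ range N, v i) ^ γ := by
  have hR : 0 ≤ R := by
    have h := (hv 0).1.trans (hv 0).2
    exact ha.le.trans ((mul_le_mul_iff_left₀ (by positivity)).1 h)
  rcases le_or_gt α 0 with hα | hα
  · refine ⟨0, R, zero_lt_one, fun N k _ => ?_⟩
    rw [Real.rpow_zero, mul_one]
    exact (hv k).2.trans (mul_le_of_le_one_right hR
      (Real.rpow_le_one_of_one_le_of_nonpos (by simp) hα))
  · set γ := α / (α + 1)
    have hsum : ∀ N : ℕ, (N : ℝ) ^ (α + 1) ≤ (α + 1) / a * ∑ i ∈ range N, v i := fun N => by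
      have h1 := rpow_add_one_div_le_sum_range_add_one_rpow hα.le N
      have h2 : a * ∑ k ∈ range N, ((k : ℝ) + 1) ^ α ≤ ∑ i ∈ range N, v i := by
        rw [mul_sum]; exact sum_le_sum fun k _ => (hv k).1
      rw [div_le_iff₀ (by linarith)] at h1
      rw [div_mul_eq_mul_div, le_div_iff₀ ha]
      nlinarith
    refine ⟨γ, R * ((α + 1) / a) ^ γ, by rw [div_lt_one (by linarith)]; linarith,
      fun N k hk => ?_⟩
    have hk' : (k : ℝ) + 1 ≤ N := by exact_mod_cast hk
    calc v k ≤ R * ((k : ℝ) + 1) ^ α := (hv k).2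
      _ ≤ R * (N : ℝ) ^ α := by gcongr
      _ = R * ((N : ℝ) ^ (α + 1)) ^ γ := by
          rw [← Real.rpow_mul (by positivity)]
          congr 2
          simp only [γ]
          field_simp
      _ ≤ R * ((α + 1) / a * ∑ i ∈ range N, v i) ^ γ := by
          gcongr
          exact hsum N
      _ = R * ((α + 1) / a) ^ γ * (∑ i ∈ range N, v i) ^ γ := by
          have hB : 0 ≤ ∑ i ∈ range N, v i :=
            sum_nonneg fun i _ => (hv i).1.trans' (by positivity)
          rw [Real.mul_rpow (by positivity) hB]
          ring

lemma exists_subseq_ratio_tendsto_one {B : ℕ → ℝ} (hB : Monotone B)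
    (hBtop : Tendsto B atTop atTop) (hstep : Tendsto (fun m => B m / B (m + 1)) atTop (𝓝 1))
    {p : ℝ} (hp : 0 < p) :
    ∃ n : ℕ → ℕ, Monotone n ∧ Tendsto n atTop atTop ∧
      (∀ j : ℕ, ((j : ℝ) + 1) ^ p ≤ B (n j)) ∧
      Tendsto (fun j => B (n (j + 1)) / B (n j)) atTop (𝓝 1) := by
  set t : ℕ → ℝ := fun j => ((j : ℝ) + 1) ^ p
  have ht : ∀ j, 0 < t j := fun j => by positivity
  have hex : ∀ j, ∃ m, t j ≤ B m := fun j => (hBtop.eventually_ge_atTop (t j)).exists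
  set n : ℕ → ℕ := fun j => Nat.find (hex j)
  have hspec : ∀ j, t j ≤ B (n j) := fun j => Nat.find_spec (hex j)
  have hBpos : ∀ j, 0 < B (n j) := fun j => (ht j).trans_le (hspec j)
  have hmono : Monotone n := fun a b hab =>
    Nat.find_mono fun m hm => le_trans (Real.rpow_le_rpow (by positivity)
      (by simp only [add_le_add_iff_right, Nat.cast_le, hab]) hp.le) hm
  have htop : Tendsto n atTop atTop := by
    refine tendsto_atTop_atTop.2 fun m => ?_
    have htt : Tendsto t atTop atTop :=
      (tendsto_rpow_atTop hp).comp (tendsto_atTop_add_const_right _ 1 tendsto_natCast_atTop_atTop)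
    obtain ⟨J, hJ⟩ := eventually_atTop.1 (htt.eventually_gt_atTop (B m))
    exact ⟨J, fun j hj => (hB.reflect_lt ((hJ j hj).trans_le (hspec j))).le⟩
  -- `B (n j - 1) < t j ≤ B (n j)` squeezes `t j / B (n j)` between `B m / B (m + 1)` and `1`
  have hkey : Tendsto (fun j => t j / B (n j)) atTop (𝓝 1) := by
    refine tendsto_of_tendsto_of_tendsto_of_le_of_le'
      ((hstep.comp (tendsto_sub_atTop_nat 1)).comp htop) tendsto_const_nhds ?_ ?_
    · filter_upwards [htop.eventually_ge_atTop 1] with j hj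
      simp only [Function.comp_apply, Nat.sub_add_cancel hj]
      gcongr
      · exact (hBpos j).le
      · exact (not_le.1 (Nat.find_min (hex j) (Nat.sub_lt hj one_pos))).le
    · exact Eventually.of_forall fun j => div_le_one_of_le₀ (hspec j) (hBpos j).le
  have hshift : Tendsto (fun j => t j / t (j + 1)) atTop (𝓝 1) := by
    have h := (tendsto_natCast_div_add_atTop (1 : ℝ)).comp (tendsto_add_atTop_nat 1)
    have h' := h.rpow_const (p := p) (Or.inr hp.le)
    rw [Real.one_rpow] at h'
    refine h'.congr fun j => ?_
    simp only [Function.comp_apply, t]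
    rw [← Real.div_rpow (by positivity) (by positivity)]
    push_cast
    ring_nf
  refine ⟨n, hmono, htop, hspec, ?_⟩
  have h := (hkey.div (hkey.comp (tendsto_add_atTop_nat 1)) one_ne_zero).div hshift one_ne_zero
  rw [div_one, div_one] at h
  refine h.congr fun j => ?_
  have := ht j; have := ht (j + 1); have := hBpos j; have := hBpos (j + 1)
  simp only [Pi.div_apply, Function.comp_apply]
  field_simp

lemma exists_bracket_of_monotone {n : ℕ → ℕ} (hn : Monotone n) (htop : Tendsto n atTop atTop)
    {J N : ℕ} (hJN : n J ≤ N) : ∃ j, J ≤ j ∧ n j ≤ N ∧ N < n (j + 1) := by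
  have hex : ∃ k, N < n k := (htop.eventually_gt_atTop N).exists
  have hJ : J < Nat.find hex := by
    by_contra! h
    exact (Nat.find_spec hex).not_ge ((hn h).trans hJN)
  refine ⟨Nat.find hex - 1, by omega, not_lt.1 (Nat.find_min hex (by omega)), ?_⟩
  rw [Nat.sub_add_cancel (by omega)]
  exact Nat.find_spec hex

lemma tendsto_of_bracket {β : Type*} [TopologicalSpace β] [Preorder β] [OrderTopology β]
    {n : ℕ → ℕ} (hn : Monotone n) (htop : Tendsto n atTop atTop) {f L U : ℕ → β} {b : β}
    (hL : Tendsto L atTop (𝓝 b)) (hU : Tendsto U atTop (𝓝 b))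
    (hLU : ∀ j N, n j ≤ N → N < n (j + 1) → L j ≤ f N ∧ f N ≤ U j) :
    Tendsto f atTop (𝓝 b) := by
  refine tendsto_order.2 ⟨fun b' hb' => ?_, fun b' hb' => ?_⟩
  · obtain ⟨J, hJ⟩ := eventually_atTop.1 (hL.eventually (lt_mem_nhds hb'))
    filter_upwards [eventually_ge_atTop (n J)] with N hN
    obtain ⟨j, hJj, h1, h2⟩ := exists_bracket_of_monotone hn htop hN
    exact (hJ j hJj).trans_le (hLU j N h1 h2).1
  · obtain ⟨J, hJ⟩ := eventually_atTop.1 (hU.eventually (gt_mem_nhds hb'))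
    filter_upwards [eventually_ge_atTop (n J)] with N hN
    obtain ⟨j, hJj, h1, h2⟩ := exists_bracket_of_monotone hn htop hN
    exact (hLU j N h1 h2).2.trans_lt (hJ j hJj)

lemma tendsto_div_of_tendsto_div_comp {S B : ℕ → ℝ} (hS0 : ∀ N, 0 ≤ S N) (hS : Monotone S)
    (hB : Monotone B) {n : ℕ → ℕ} (hn : Monotone n) (htop : Tendsto n atTop atTop)
    (hBpos : ∀ j, 0 < B (n j))
    (hratio : Tendsto (fun j => B (n (j + 1)) / B (n j)) atTop (𝓝 1))
    (hsub : Tendsto (fun j => S (n j) / B (n j)) atTop (𝓝 1)) :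
    Tendsto (fun N => S N / B N) atTop (𝓝 1) := by
  refine tendsto_of_bracket hn htop (L := fun j => S (n j) / B (n j) / (B (n (j + 1)) / B (n j)))
    (U := fun j => S (n (j + 1)) / B (n (j + 1)) * (B (n (j + 1)) / B (n j)))
    (by simpa only [div_one, Pi.div_def] using hsub.div hratio one_ne_zero)
    (by simpa using (hsub.comp (tendsto_add_atTop_nat 1)).mul hratio) fun j N h1 h2 => ?_
  have hBN : 0 < B N := (hBpos j).trans_le (hB h1)
  have := hBpos j; have := hBpos (j + 1)
  constructor
  · calc S (n j) / B (n j) / (B (n (j + 1)) / B (n j)) = S (n j) / B (n (j + 1)) := by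
          field_simp
      _ ≤ S N / B N := div_le_div₀ (hS0 N) (hS h1) hBN (hB h2.le)
  · calc S N / B N ≤ S (n (j + 1)) / B (n j) :=
          div_le_div₀ (hS0 _) (hS h2.le) (hBpos j) (hB h1)
      _ = S (n (j + 1)) / B (n (j + 1)) * (B (n (j + 1)) / B (n j)) := by field_simp

section PartialSums

variable {v : ℕ → ℝ} {γ C : ℝ}

lemma tendsto_sum_range_div_sum_range_succ (hv : ∀ k, 0 ≤ v k)
    (hBtop : Tendsto (fun N => ∑ k ∈ range N, v k) atTop atTop) (hγ : γ < 1)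
    (hmax : ∀ N, ∀ k < N, v k ≤ C * (∑ i ∈ range N, v i) ^ γ) :
    Tendsto (fun N => (∑ k ∈ range N, v k) / ∑ k ∈ range (N + 1), v k) atTop (𝓝 1) := by
  have hBtop' := hBtop.comp (tendsto_add_atTop_nat 1)
  have hdecay :
      Tendsto (fun N => C * (∑ k ∈ range (N + 1), v k) ^ (γ - 1)) atTop (𝓝 0) := by
    have h := ((tendsto_rpow_neg_atTop (sub_pos.2 hγ)).comp hBtop').const_mul C
    rw [mul_zero, neg_sub] at h
    exact h
  have hsmall : Tendsto (fun N => v N / ∑ k ∈ range (N + 1), v k) atTop (𝓝 0) := by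
    refine tendsto_of_tendsto_of_tendsto_of_le_of_le' tendsto_const_nhds hdecay
      (Eventually.of_forall fun N => div_nonneg (hv N) (sum_nonneg fun k _ => hv k)) ?_
    filter_upwards [hBtop'.eventually_gt_atTop 0] with N hN
    rw [Function.comp_apply] at hN
    rw [Real.rpow_sub_one hN.ne', mul_div_assoc']
    exact div_le_div_of_nonneg_right (hmax (N + 1) N N.lt_succ_self) hN.le
  have h := (tendsto_const_nhds (x := (1 : ℝ))).sub hsmall
  rw [sub_zero] at h
  refine h.congr' ?_
  filter_upwards [hBtop'.eventually_gt_atTop 0] with N hN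
  rw [Function.comp_apply] at hN
  rw [sum_range_succ] at hN ⊢
  field_simp
  ring

lemma sum_range_sq_le_mul_rpow_mul (hv : ∀ k, 0 ≤ v k)
    (hmax : ∀ N, ∀ k < N, v k ≤ C * (∑ i ∈ range N, v i) ^ γ) (N : ℕ) :
    ∑ k ∈ range N, v k ^ 2 ≤ C * (∑ k ∈ range N, v k) ^ γ * ∑ k ∈ range N, v k := by
  rw [mul_sum]
  refine sum_le_sum fun k hk => ?_
  rw [sq, mul_comm]
  exact mul_le_mul_of_nonneg_right (hmax N k (mem_range.1 hk)) (hv k)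

lemma exists_subseq_summable_sum_sq_div_sq (hv : ∀ k, 0 ≤ v k)
    (hBtop : Tendsto (fun N => ∑ k ∈ range N, v k) atTop atTop) (hγ : γ < 1)
    (hmax : ∀ N, ∀ k < N, v k ≤ C * (∑ i ∈ range N, v i) ^ γ) :
    ∃ n : ℕ → ℕ, Monotone n ∧ Tendsto n atTop atTop ∧ (∀ j, 0 < ∑ k ∈ range (n j), v k) ∧
      Tendsto (fun j => (∑ k ∈ range (n (j + 1)), v k) / ∑ k ∈ range (n j), v k) atTop
        (𝓝 1) ∧
      Summable fun j => (∑ k ∈ range (n j), v k ^ 2) / (∑ k ∈ range (n j), v k) ^ 2 := by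
  set B := fun N => ∑ k ∈ range N, v k
  have hB : Monotone B := fun a b hab =>
    sum_le_sum_of_subset_of_nonneg (range_mono hab) fun k _ _ => hv k
  -- choosing `B (n j) ≥ (j + 1) ^ p` with `p (1 - γ) = 2` makes the terms `O(j⁻²)`
  set p := 2 / (1 - γ)
  have hp : 0 < p := div_pos two_pos (sub_pos.2 hγ)
  obtain ⟨n, hn, htop, hspec, hratio⟩ := exists_subseq_ratio_tendsto_one hB hBtop
    (tendsto_sum_range_div_sum_range_succ hv hBtop hγ hmax) hp
  have hBpos : ∀ j, 0 < B (n j) := fun j => (by positivity : (0 : ℝ) < _).trans_le (hspec j)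
  refine ⟨n, hn, htop, hBpos, hratio, ?_⟩
  have hbound : ∀ j : ℕ, (∑ k ∈ range (n j), v k ^ 2) / B (n j) ^ 2 ≤
      |C| * ((j : ℝ) + 1) ^ (-2 : ℝ) := fun j => by
    have hx := hBpos j
    calc (∑ k ∈ range (n j), v k ^ 2) / B (n j) ^ 2
          ≤ C * B (n j) ^ γ * B (n j) / B (n j) ^ 2 :=
          div_le_div_of_nonneg_right (sum_range_sq_le_mul_rpow_mul hv hmax _) (sq_nonneg _)
      _ = C * B (n j) ^ (γ - 1) := by rw [Real.rpow_sub_one hx.ne']; field_simp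
      _ ≤ |C| * (((j : ℝ) + 1) ^ p) ^ (γ - 1) := by
          gcongr ?_ * ?_
          · exact le_abs_self C
          · exact Real.rpow_le_rpow_of_nonpos (by positivity) (hspec j) (by linarith)
      _ = |C| * ((j : ℝ) + 1) ^ (-2 : ℝ) := by
          rw [← Real.rpow_mul (by positivity)]
          congr 2
          have : 1 - γ ≠ 0 := (sub_pos.2 hγ).ne'
          simp only [p]
          field_simp
          ring
  refine Summable.of_nonneg_of_le (fun j => by positivity) hbound (Summable.mul_left _ ?_)
  exact ((summable_nat_add_iff (f := fun n : ℕ => (n : ℝ) ^ (-2 : ℝ)) 1).2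
    (Real.summable_nat_rpow.2 (by norm_num))).congr fun j => by push_cast; rfl

end PartialSums

section Probability

variable {Ω : Type*} [MeasurableSpace Ω] {μ : Measure Ω} [IsFiniteMeasure μ]

lemma ae_eventually_abs_sub_integral_lt_of_summable {Y : ℕ → Ω → ℝ} {b : ℕ → ℝ}
    (hY : ∀ j, MemLp (Y j) 2 μ) (hb : ∀ j, 0 < b j)
    (hsum : Summable fun j => variance (Y j) μ / b j ^ 2) {ε : ℝ} (hε : 0 < ε) :
    ∀ᵐ ω ∂μ, ∀ᶠ j in atTop, |Y j ω - μ[Y j]| < ε * b j := by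
  set f := fun j => variance (Y j) μ / (ε * b j) ^ 2
  have hf : Summable f :=
    (hsum.mul_left (ε ^ 2)⁻¹).congr fun j => by simp only [f, mul_pow]; field_simp
  have hfin : ∑' j, μ {ω | ε * b j ≤ |Y j ω - μ[Y j]|} ≠ ⊤ := by
    refine ne_top_of_le_ne_top ?_ (ENNReal.tsum_le_tsum fun j =>
      meas_ge_le_variance_div_sq (hY j) (mul_pos hε (hb j)))
    rw [← ENNReal.ofReal_tsum_of_nonneg
      (fun j => div_nonneg (variance_nonneg _ _) (sq_nonneg _)) hf]
    exact ENNReal.ofReal_ne_top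
  filter_upwards [ae_eventually_notMem hfin] with ω hω
  simpa only [Set.mem_ofPred_eq, not_le] using hω

lemma ae_tendsto_sub_integral_div_of_summable {Y : ℕ → Ω → ℝ} {b : ℕ → ℝ}
    (hY : ∀ j, MemLp (Y j) 2 μ) (hb : ∀ j, 0 < b j)
    (hsum : Summable fun j => variance (Y j) μ / b j ^ 2) :
    ∀ᵐ ω ∂μ, Tendsto (fun j => (Y j ω - μ[Y j]) / b j) atTop (𝓝 0) := by
  have h := ae_all_iff.2 fun m : ℕ =>
    ae_eventually_abs_sub_integral_lt_of_summable hY hb hsum (Nat.one_div_pos_of_nat (n := m))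
  filter_upwards [h] with ω hω
  refine Metric.tendsto_nhds.2 fun ε hε => ?_
  obtain ⟨m, hm⟩ := exists_nat_one_div_lt hε
  filter_upwards [hω m] with j hj
  rw [Real.dist_eq, sub_zero, abs_div, abs_of_pos (hb j), div_lt_iff₀ (hb j)]
  exact hj.trans_le (mul_le_mul_of_nonneg_right hm.le (hb j).le)

theorem ae_tendsto_sum_div_sum_integral_of_variance_le {X : ℕ → Ω → ℝ}
    (hX : ∀ k, MemLp (X k) 2 μ) (hX0 : ∀ k, 0 ≤ X k)
    (hindep : Pairwise fun i j => IndepFun (X i) (X j) μ) {C₁ : ℝ}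
    (hvar : ∀ k, variance (X k) μ ≤ C₁ * μ[X k] ^ 2)
    (hBtop : Tendsto (fun N => ∑ k ∈ range N, μ[X k]) atTop atTop) {γ C : ℝ} (hγ : γ < 1)
    (hmax : ∀ N, ∀ k < N, μ[X k] ≤ C * (∑ i ∈ range N, μ[X i]) ^ γ) :
    ∀ᵐ ω ∂μ,
      Tendsto (fun N => (∑ k ∈ range N, X k ω) / ∑ k ∈ range N, μ[X k]) atTop (𝓝 1) := by
  set B := fun N => ∑ k ∈ range N, μ[X k]
  have hv : ∀ k, 0 ≤ μ[X k] := fun k => integral_nonneg (hX0 k)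
  obtain ⟨n, hn, htop, hBpos, hratio, hsum⟩ :=
    exists_subseq_summable_sum_sq_div_sq hv hBtop hγ hmax
  have hSL2 : ∀ N, MemLp (∑ k ∈ range N, X k) 2 μ := fun N =>
    memLp_finsetSum' _ fun k _ => hX k
  have hSmean : ∀ N, μ[∑ k ∈ range N, X k] = B N := fun N => by
    simp only [Finset.sum_apply]
    exact integral_finsetSum _ fun k _ => (hX k).integrable one_le_two
  have hSvar :
      ∀ N, variance (∑ k ∈ range N, X k) μ ≤ C₁ * ∑ k ∈ range N, μ[X k] ^ 2 := by
    intro N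
    rw [IndepFun.variance_sum (fun k _ => hX k) fun i _ j _ hij => hindep hij, mul_sum]
    exact sum_le_sum fun k _ => hvar k
  have hsumvar : Summable fun j => variance (∑ k ∈ range (n j), X k) μ / B (n j) ^ 2 :=
    Summable.of_nonneg_of_le (fun j => div_nonneg (variance_nonneg _ _) (sq_nonneg _))
      (fun j => by rw [← mul_div_assoc]; exact div_le_div_of_nonneg_right (hSvar _) (sq_nonneg _))
      (hsum.mul_left C₁)
  filter_upwards [ae_tendsto_sub_integral_div_of_summable (fun j => hSL2 (n j)) hBpos hsumvar]
    with ω hω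
  refine tendsto_div_of_tendsto_div_comp (fun N => sum_nonneg fun k _ => hX0 k ω)
    (fun a b hab => sum_le_sum_of_subset_of_nonneg (range_mono hab) fun k _ _ => hX0 k ω)
    (fun a b hab => sum_le_sum_of_subset_of_nonneg (range_mono hab) fun k _ _ => hv k)
    hn htop hBpos hratio ?_
  have h := hω.const_add 1
  rw [add_zero] at h
  refine h.congr fun j => ?_
  rw [hSmean, Finset.sum_apply]
  field_simp [(hBpos j).ne']
  ring

end Probability

lemma sum_Icc_one_eq_sum_range (f : ℕ → ℝ) (N : ℕ) :
    ∑ k ∈ Icc 1 N, f k = ∑ k ∈ range N, f (k + 1) := by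
  rw [range_eq_Ico, sum_Ico_add' f 0 N 1]
  rfl

theorem slln_ratio_of_squares_tendsto_one_general
    {Ω : Type*} [MeasurableSpace Ω] (μ : Measure Ω) [IsProbabilityMeasure μ]
    (ξ : ℕ → Ω → ℝ)
    (hmeas : ∀ k, Measurable (ξ k))
    (hindep : iIndepFun ξ μ)
    (hint4 : ∀ k, 1 ≤ k → Integrable (fun ω => (ξ k ω) ^ 4) μ)
    (hvarpos : ∀ k, 1 ≤ k → 0 < ∫ ω, (ξ k ω) ^ 2 ∂μ)
    (c α : ℝ) (hc : 0 < c) (hα : -1 ≤ α)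
    (hlim : Tendsto (fun k : ℕ => (k : ℝ) ^ (-α) * ∫ ω, (ξ k ω) ^ 2 ∂μ)
      atTop (nhds c))
    (c₁ : ℝ)
    (hmom4 : ∀ k, 1 ≤ k →
      ∫ ω, (ξ k ω) ^ 4 ∂μ ≤ c₁ * (∫ ω, (ξ k ω) ^ 2 ∂μ) ^ 2) :
    ∀ᵐ ω ∂μ, Tendsto
      (fun N : ℕ => (∑ k ∈ Finset.Icc 1 N, (ξ k ω) ^ 2) /
        (∑ k ∈ Finset.Icc 1 N, ∫ ω', (ξ k ω') ^ 2 ∂μ))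
      atTop (nhds 1) := by
  set X : ℕ → Ω → ℝ := fun k ω => ξ (k + 1) ω ^ 2
  have hX : ∀ k, MemLp (X k) 2 μ := fun k =>
    (memLp_two_iff_integrable_sq ((hmeas _).pow_const 2).aestronglyMeasurable).2
      (by simpa only [X, ← pow_mul] using hint4 (k + 1) k.succ_pos)
  have hindepX : Pairwise fun i j => IndepFun (X i) (X j) μ := fun i j hij =>
    (hindep.indepFun (by omega : i + 1 ≠ j + 1)).comp (measurable_id.pow_const 2)
      (measurable_id.pow_const 2)
  have hvar : ∀ k, variance (X k) μ ≤ c₁ * μ[X k] ^ 2 := fun k =>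
    (variance_le_expectation_sq (hX k).1).trans
      (by simpa only [X, Pi.pow_apply, ← pow_mul] using hmom4 (k + 1) k.succ_pos)
  have hlim' : Tendsto (fun k : ℕ => ((k : ℝ) + 1) ^ (-α) * μ[X k]) atTop (𝓝 c) := by
    simpa only [Function.comp_def, Nat.cast_add_one, X] using hlim.comp (tendsto_add_atTop_nat 1)
  obtain ⟨a, R, ha, hbounds⟩ :=
    exists_rpow_mul_le_and_le_rpow_mul (fun k => hvarpos (k + 1) k.succ_pos) hc hlim'
  obtain ⟨γ, C, hγ, hmax⟩ := exists_le_mul_sum_range_rpow ha hbounds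
  filter_upwards [ae_tendsto_sum_div_sum_integral_of_variance_le hX (fun k ω => sq_nonneg _)
    hindepX hvar (tendsto_sum_range_atTop_of_rpow_mul_le hα ha fun k => (hbounds k).1) hγ hmax]
    with ω hω
  simpa only [sum_Icc_one_eq_sum_range] using hω

/-- Strong Law of Large Numbers (second part, Theorem A.1 of the paper):
if `ξ k`, `k ≥ 1`, are independent, centered random variables with positive
variances, `k^(-α) * E[ξ_k²] → c > 0` for some `α ≥ -1`, and moreover
`E[ξ_k⁴] ≤ c₁ (E[ξ_k²])²` for all `k` with `c₁ > 0` independent of `k`, then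
almost surely `(∑_{k=1}^N ξ_k²) / (∑_{k=1}^N E[ξ_k²]) → 1`. -/
theorem slln_ratio_of_squares_tendsto_one
    {Ω : Type*} [MeasurableSpace Ω] (μ : Measure Ω) [IsProbabilityMeasure μ]
    (ξ : ℕ → Ω → ℝ)
    (hmeas : ∀ k, Measurable (ξ k))
    (hindep : iIndepFun ξ μ)
    (hint : ∀ k, 1 ≤ k → Integrable (ξ k) μ)
    (hint2 : ∀ k, 1 ≤ k → Integrable (fun ω => (ξ k ω) ^ 2) μ)
    (hint4 : ∀ k, 1 ≤ k → Integrable (fun ω => (ξ k ω) ^ 4) μ)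
    (hmean : ∀ k, 1 ≤ k → ∫ ω, ξ k ω ∂μ = 0)
    (hvarpos : ∀ k, 1 ≤ k → 0 < ∫ ω, (ξ k ω) ^ 2 ∂μ)
    (c α : ℝ) (hc : 0 < c) (hα : -1 ≤ α)
    (hlim : Tendsto (fun k : ℕ => (k : ℝ) ^ (-α) * ∫ ω, (ξ k ω) ^ 2 ∂μ)
      atTop (nhds c))
    (c₁ : ℝ) (hc₁ : 0 < c₁)
    (hmom4 : ∀ k, 1 ≤ k →
      ∫ ω, (ξ k ω) ^ 4 ∂μ ≤ c₁ * (∫ ω, (ξ k ω) ^ 2 ∂μ) ^ 2) :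
    ∀ᵐ ω ∂μ, Tendsto
      (fun N : ℕ => (∑ k ∈ Finset.Icc 1 N, (ξ k ω) ^ 2) /
        (∑ k ∈ Finset.Icc 1 N, ∫ ω', (ξ k ω') ^ 2 ∂μ))
      atTop (nhds 1) :=
  slln_ratio_of_squares_tendsto_one_general μ ξ hmeas hindep hint4 hvarpos c α hc hα hlim c₁ hmom4
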